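/- Conversely: let X be a random variable and a ≥ -1, b ≥ -1, ε > 0, σ > 0, φ(n) = √(2n log log n). If Σ_{n=1}^∞ (log n)^a (log log n)^b P(|X| ≥ 3εσ φ(n)) < ∞, then E[X² (log|X|)^a (log log|X|)^{b-1}] < ∞. -/

import Mathlib

open Real Filter Set MeasureTheory ProbabilityTheory

/-- `lg x = ln (max x e)`. -/
noncomputable def lg (x : ℝ) : ℝ := Real.log (max x (Real.exp 1))

/-- `llg x = lg (lg x)`. -/
noncomputable def llg (x : ℝ) : ℝ := lg (lg x)

/-- `φ(n) = √(2 n log log n)`. -/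
noncomputable def phi (n : ℕ) : ℝ := Real.sqrt (2 * n * llg n)

open scoped ENNReal NNReal

lemma one_le_lg (x : ℝ) : 1 ≤ lg x := by
  rw [lg]
  calc (1:ℝ) = Real.log (Real.exp 1) := (Real.log_exp 1).symm
  _ ≤ _ := Real.log_le_log (exp_pos 1) (le_max_right _ _)

lemma lg_pos (x : ℝ) : 0 < lg x := lt_of_lt_of_le one_pos (one_le_lg x)

lemma lg_mono : Monotone lg := fun x y h => by
  exact Real.log_le_log (lt_of_lt_of_le (exp_pos 1) (le_max_right _ _))
    (max_le_max h le_rfl)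

lemma lg_eq_log {x : ℝ} (h : Real.exp 1 ≤ x) : lg x = Real.log x := by
  rw [lg, max_eq_left h]

lemma one_le_llg (x : ℝ) : 1 ≤ llg x := one_le_lg _
lemma llg_pos (x : ℝ) : 0 < llg x := lg_pos _
lemma llg_mono : Monotone llg := fun x y h => lg_mono (lg_mono h)

lemma lg_le_self {x : ℝ} (h : 1 ≤ x) : lg x ≤ max x (Real.exp 1) :=
  Real.log_le_sub_one_of_pos (lt_of_lt_of_le (exp_pos 1) (le_max_right _ _)) |>.trans (by linarith [le_max_left x (Real.exp 1), le_max_right x (Real.exp 1)])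

lemma llg_le_lg (x : ℝ) : llg x ≤ lg x := by
  rw [llg, lg]
  rcases le_or_gt (Real.exp 1) (lg x) with h | h
  · rw [max_eq_left h]
    exact (Real.log_le_sub_one_of_pos (lg_pos x)).trans (by linarith)
  · rw [max_eq_right h.le, Real.log_exp]; exact one_le_lg x

lemma lg_tendsto : Tendsto lg atTop atTop := by
  apply Real.tendsto_log_atTop.comp
  exact tendsto_atTop_mono (fun x => le_max_left x _) tendsto_id

lemma llg_tendsto : Tendsto llg atTop atTop := lg_tendsto.comp lg_tendsto

lemma phi_mono : Monotone phi := fun n m h => by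
  apply Real.sqrt_le_sqrt
  have h1 : (n:ℝ) ≤ m := Nat.cast_le.2 h
  have := llg_mono h1
  have := llg_pos (n:ℝ)
  nlinarith [llg_pos (m:ℝ), Nat.cast_nonneg (α := ℝ) n]

lemma sqrt_le_phi (n : ℕ) : Real.sqrt n ≤ phi n := by
  apply Real.sqrt_le_sqrt
  nlinarith [one_le_llg (n:ℝ), Nat.cast_nonneg (α := ℝ) n]

lemma phi_tendsto : Tendsto phi atTop atTop := by
  apply tendsto_atTop_mono sqrt_le_phi
  have hs : Tendsto Real.sqrt atTop atTop :=
    tendsto_atTop_atTop_of_monotone (fun x y h => Real.sqrt_le_sqrt h)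
      (fun b => ⟨b^2, by rw [Real.sqrt_sq_eq_abs]; exact le_abs_self b⟩)
  exact hs.comp tendsto_natCast_atTop_atTop

-- factor-4 rpow comparison
lemma rpow_comp4 {s t : ℝ} (ht : 0 < t) (h1 : t/4 ≤ s) (h2 : s ≤ 4*t) (c : ℝ) :
    s ^ c ≤ 4 ^ |c| * t ^ c := by
  have hs : 0 < s := lt_of_lt_of_le (by linarith) h1
  have hst : s ^ c = (s/t) ^ c * t ^ c := by
    rw [← Real.mul_rpow (by positivity) ht.le, div_mul_cancel₀]
    exact ht.ne'
  rw [hst]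
  apply mul_le_mul_of_nonneg_right _ (Real.rpow_nonneg ht.le c)
  rcases le_or_gt 0 c with h | h
  · rw [abs_of_nonneg h]
    exact Real.rpow_le_rpow (by positivity) (by rw [div_le_iff₀ ht]; linarith) h
  · rw [abs_of_neg h]
    calc (s/t) ^ c ≤ (1/4 : ℝ) ^ c := by
          apply Real.rpow_le_rpow_of_nonpos (by norm_num) _ h.le
          rw [le_div_iff₀ ht]; linarith
    _ = 4 ^ (-c) := by
          rw [one_div, ← Real.rpow_neg_one (4:ℝ), ← Real.rpow_mul (by norm_num : (0:ℝ) ≤ 4)]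
          norm_num

lemma rpow_le_abs {s t c : ℝ} (h1 : 1 ≤ s) (h2 : s ≤ t) : s ^ c ≤ t ^ |c| := by
  rcases le_or_gt 0 c with h | h
  · rw [abs_of_nonneg h]; exact Real.rpow_le_rpow (by linarith) h2 h
  · rw [abs_of_neg h]
    calc s ^ c ≤ s ^ (0:ℝ) := Real.rpow_le_rpow_of_exponent_le h1 h.le
    _ = 1 := Real.rpow_zero s
    _ = t ^ (0:ℝ) := (Real.rpow_zero t).symm
    _ ≤ t ^ (-c) := Real.rpow_le_rpow_of_exponent_le (by linarith) (by linarith)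

lemma exp_facts : (2:ℝ) ≤ rexp 1 ∧ rexp 1 ≤ 3 ∧ (4:ℝ) ≤ rexp 2 ∧ (16:ℝ) ≤ rexp (rexp 2) ∧ Real.log 2 ≤ 1 := by
  have h1 : (2:ℝ) ≤ rexp 1 := by have := Real.add_one_le_exp 1; linarith
  have h2 : rexp 1 ≤ 3 := by have := Real.exp_one_lt_d9; linarith
  have h3 : rexp 2 = rexp 1 * rexp 1 := by rw [← Real.exp_add]; norm_num
  have h4 : (4:ℝ) ≤ rexp 2 := by nlinarith
  have h5 : rexp 4 = rexp 2 * rexp 2 := by rw [← Real.exp_add]; norm_num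
  have h6 : (16:ℝ) ≤ rexp (rexp 2) := by
    have : rexp 4 ≤ rexp (rexp 2) := Real.exp_le_exp.2 h4
    nlinarith
  have h7 : Real.log 2 ≤ 1 := by
    rw [← Real.log_exp 1]
    exact Real.log_le_log (by norm_num) (by linarith)
  exact ⟨h1, h2, h3 ▸ h4, h6, h7⟩

lemma log_facts {M : ℝ} (h1 : rexp (rexp 2) ≤ M) :
    lg M = Real.log M ∧ rexp 2 ≤ Real.log M ∧ llg M = Real.log (Real.log M) ∧
      2 ≤ Real.log (Real.log M) ∧ Real.log M ≤ M ∧ Real.log (Real.log M) ≤ Real.log M := by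
  obtain ⟨e1, e2, e3, e4, e5⟩ := exp_facts
  have hMe : rexp 1 ≤ M := by linarith
  have hlg : lg M = Real.log M := lg_eq_log hMe
  have hL : rexp 2 ≤ Real.log M := by
    calc rexp 2 = Real.log (rexp (rexp 2)) := (Real.log_exp _).symm
    _ ≤ Real.log M := Real.log_le_log (exp_pos _) h1
  have hLe : rexp 1 ≤ Real.log M := by linarith
  have hllg : llg M = Real.log (Real.log M) := by
    rw [llg, hlg, lg_eq_log hLe]
  have hLL : 2 ≤ Real.log (Real.log M) := by
    calc (2:ℝ) = Real.log (rexp 2) := (Real.log_exp _).symm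
    _ ≤ Real.log (Real.log M) := Real.log_le_log (exp_pos _) hL
  have hMpos : 0 < M := by linarith
  have hLM : Real.log M ≤ M := by linarith [Real.log_le_sub_one_of_pos hMpos]
  have hLLL : Real.log (Real.log M) ≤ Real.log M := by
    linarith [Real.log_le_sub_one_of_pos (show (0:ℝ) < Real.log M by linarith)]
  exact ⟨hlg, hL, hllg, hLL, hLM, hLLL⟩

lemma quad1 {M : ℝ} (h : 3 ≤ M) : M + 1 ≤ M ^ 2 := by nlinarith

lemma quad2 {M : ℝ} (h : 3 ≤ M) : rexp 1 ≤ M ^ 2 := by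
  have := Real.exp_one_lt_d9
  nlinarith

lemma layer_est (a b c : ℝ) (hc : 0 < c) (m : ℕ)
    (h1 : rexp (rexp 2) ≤ (m:ℝ)+1)
    (h2 : 1 ≤ 2*c^2* llg ((m:ℝ)+1))
    (h3 : rexp (rexp 1)^2 ≤ (m:ℝ)+1)
    (h4 : 8*c^2 ≤ ((m:ℝ)+1)^2)
    {x : ℝ} (hx0 : 0 ≤ x) (hx1 : c * phi (m+1) ≤ x) (hx2 : x ≤ c * phi (m+2)) :
    x^2 * lg x ^ a * llg x ^ (b-1) ≤
      (8*c^2*(4:ℝ)^|a| * (4:ℝ)^|b-1|) *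
        (((m:ℝ)+1) * (lg ((m:ℝ)+1) ^ a * llg ((m:ℝ)+1) ^ b)) := by
  obtain ⟨e1, e2, e3, e4, e5⟩ := exp_facts
  set M : ℝ := (m:ℝ)+1 with hM
  obtain ⟨hlg, hL2, hllg, hLL2, hLM, hLLL⟩ := log_facts h1
  set L : ℝ := Real.log M with hLdef
  set LL : ℝ := Real.log L with hLLdef
  clear_value M L LL
  have hMpos : (0:ℝ) < M := by linarith
  have hLpos : (0:ℝ) < L := by rw [hLdef]; linarith
  have hLLpos : (0:ℝ) < LL := by rw [hLLdef]; linarith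
  have hL4 : (4:ℝ) ≤ L := by rw [hLdef]; linarith
  -- squares of phi
  have hphi1 : (phi (m+1))^2 = 2 * M * LL := by
    rw [phi, Real.sq_sqrt (mul_nonneg (by positivity) (llg_pos _).le)]
    push_cast
    rw [← hM, hllg]
  have hcast2 : ((m+2:ℕ):ℝ) = M + 1 := by push_cast; rw [hM]; ring
  have hphi2 : (phi (m+2))^2 = 2 * (M+1) * llg (M+1) := by
    rw [phi, Real.sq_sqrt (mul_nonneg (by positivity) (llg_pos _).le), hcast2]
  -- lower bound on x
  have hphinn1 : (0:ℝ) ≤ c * phi (m+1) := mul_nonneg hc.le (Real.sqrt_nonneg _)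
  have hphinn2 : (0:ℝ) ≤ c * phi (m+2) := mul_nonneg hc.le (Real.sqrt_nonneg _)
  rw [hllg] at h2
  have hx2sq_low : M ≤ x^2 := by
    have h := mul_le_mul hx1 hx1 hphinn1 hx0
    calc M = M*1 := by ring
    _ ≤ M*(2*c^2*LL) := mul_le_mul_of_nonneg_left h2 hMpos.le
    _ = c^2*(2*M*LL) := by ring
    _ = c * phi (m+1) * (c * phi (m+1)) := by rw [← hphi1]; ring
    _ ≤ x*x := h
    _ = x^2 := by ring
  have hsqrtM : Real.sqrt M ≤ x := by
    have := Real.sqrt_le_sqrt hx2sq_low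
    rwa [Real.sqrt_sq hx0] at this
  have hxe : rexp (rexp 1) ≤ x := by
    have : rexp (rexp 1) ≤ Real.sqrt M := by
      rw [show rexp (rexp 1) = Real.sqrt (rexp (rexp 1)^2) by rw [Real.sqrt_sq (exp_pos _).le]]
      exact Real.sqrt_le_sqrt h3
    linarith
  have hxe1 : rexp 1 ≤ x := by
    have : rexp 1 ≤ rexp (rexp 1) := Real.exp_le_exp.2 (by linarith)
    linarith
  have hxpos : (0:ℝ) < x := lt_of_lt_of_le (exp_pos 1) hxe1
  have hlgx : lg x = Real.log x := lg_eq_log hxe1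
  have hlogx_low : L/2 ≤ Real.log x := by
    have h := Real.log_le_log (Real.sqrt_pos.2 hMpos) hsqrtM
    rw [Real.log_sqrt hMpos.le] at h
    rw [hLdef]; linarith
  -- upper bound on x²
  have hllgM1 : llg (M+1) ≤ 2*LL := by
    have hM3 : (3:ℝ) ≤ M := by linarith
    have h1' : M + 1 ≤ M^2 := quad1 hM3
    have h2' : llg (M+1) ≤ llg (M^2) := llg_mono h1'
    have hlgM2 : lg (M^2) = 2*L := by
      rw [lg_eq_log (quad2 hM3), Real.log_pow]
      norm_num [hLdef]
    have : llg (M^2) = Real.log (2*L) := by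
      rw [llg, hlgM2, lg_eq_log (by linarith : rexp 1 ≤ 2*L)]
    rw [this] at h2'
    have : Real.log (2*L) = Real.log 2 + LL := by
      rw [Real.log_mul (by norm_num) (ne_of_gt hLpos), hLLdef]
    linarith
  have hx2sq_up : x^2 ≤ 8*c^2*M*LL := by
    have h := mul_le_mul hx2 hx2 hx0 hphinn2
    have s1 : (M+1)*llg (M+1) ≤ (2*M)*(2*LL) :=
      mul_le_mul (by linarith) hllgM1 (llg_pos _).le (by linarith)
    calc x^2 = x*x := by ring
    _ ≤ c * phi (m+2) * (c * phi (m+2)) := h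
    _ = c^2 * (phi (m+2))^2 := by ring
    _ = c^2 * (2*(M+1)* llg (M+1)) := by rw [hphi2]
    _ = 2*c^2*((M+1)*llg (M+1)) := by ring
    _ ≤ 2*c^2*((2*M)*(2*LL)) := mul_le_mul_of_nonneg_left s1 (by positivity)
    _ = 8*c^2*M*LL := by ring
  have hxM2 : x ≤ M^2 := by
    have t1 : 8*c^2*(M*LL) ≤ M^2*(M*LL) :=
      mul_le_mul_of_nonneg_right h4 (mul_nonneg hMpos.le hLLpos.le)
    have tLLM : LL ≤ M := by linarith
    have t2 : M*LL ≤ M*M := mul_le_mul_of_nonneg_left tLLM hMpos.le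
    have t3 : M^2*(M*LL) ≤ M^2*(M*M) := mul_le_mul_of_nonneg_left t2 (sq_nonneg M)
    have hx4 : x^2 ≤ (M^2)^2 := by
      calc x^2 ≤ 8*c^2*M*LL := hx2sq_up
      _ = 8*c^2*(M*LL) := by ring
      _ ≤ M^2*(M*LL) := t1
      _ ≤ M^2*(M*M) := t3
      _ = (M^2)^2 := by ring
    have h := Real.sqrt_le_sqrt hx4
    rwa [Real.sqrt_sq hx0, Real.sqrt_sq (by positivity)] at h
  have hlogx_up : Real.log x ≤ 2*L := by
    have := Real.log_le_log hxpos hxM2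
    rw [Real.log_pow] at this
    push_cast at this
    rw [hLdef]; linarith
  -- bounds on llg x
  have hlgxe : rexp 1 ≤ Real.log x := by
    have h22 : rexp 2 = rexp 1 * rexp 1 := by rw [← Real.exp_add]; norm_num
    have : 2 * rexp 1 ≤ L := by nlinarith
    linarith
  have hllgx : llg x = Real.log (Real.log x) := by rw [llg, hlgx, lg_eq_log hlgxe]
  have hllgx_low : LL/2 ≤ Real.log (Real.log x) := by
    have h := Real.log_le_log (by linarith : (0:ℝ) < L/2) hlogx_low
    have : Real.log (L/2) = LL - Real.log 2 := by
      rw [Real.log_div (ne_of_gt hLpos) (by norm_num), hLLdef]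
    rw [this] at h
    linarith
  have hllgx_up : Real.log (Real.log x) ≤ 2*LL := by
    have h := Real.log_le_log (by linarith) hlogx_up
    have : Real.log (2*L) = Real.log 2 + LL := by
      rw [Real.log_mul (by norm_num) (ne_of_gt hLpos), hLLdef]
    rw [this] at h
    linarith
  -- rpow comparisons
  have hrp1 : lg x ^ a ≤ 4^|a| * L ^ a := by
    apply rpow_comp4 hLpos _ _ a
    · rw [hlgx]; linarith
    · rw [hlgx]; linarith
  have hrp2 : llg x ^ (b-1) ≤ 4^|b-1| * LL ^ (b-1) := by
    apply rpow_comp4 hLLpos _ _ (b-1)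
    · rw [hllgx]; linarith
    · rw [hllgx]; linarith
  -- combine
  have hfin : x^2 * lg x ^ a * llg x ^ (b-1) ≤
      (8*c^2*M*LL) * (4^|a| * L ^ a) * (4^|b-1| * LL ^ (b-1)) := by
    have n1 : (0:ℝ) ≤ 4^|a| * L ^ a :=
      mul_nonneg (Real.rpow_nonneg (by norm_num) _) (Real.rpow_nonneg hLpos.le _)
    have n2 : (0:ℝ) ≤ (8*c^2*M*LL) * (4^|a| * L ^ a) := by
      apply mul_nonneg _ n1
      positivity
    apply mul_le_mul _ hrp2 (Real.rpow_nonneg (llg_pos x).le _) n2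
    apply mul_le_mul hx2sq_up hrp1 (Real.rpow_nonneg (lg_pos x).le _) (by positivity)
  have hLLb : LL ^ b = LL ^ (b-1) * LL := by
    rw [← Real.rpow_add_one (ne_of_gt hLLpos) (b-1)]
    norm_num
  calc x^2 * lg x ^ a * llg x ^ (b-1) ≤
      (8*c^2*M*LL) * (4^|a| * L ^ a) * (4^|b-1| * LL ^ (b-1)) := hfin
  _ = (8*c^2*(4:ℝ)^|a| * (4:ℝ)^|b-1|) * (M * (L ^ a * LL ^ b)) := by
      rw [hLLb]; ring
  _ = _ := by rw [hlg, hllg]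

lemma comp_est (a b : ℝ) {m n : ℕ}
    (h1 : rexp (rexp 2) ≤ (m:ℝ)+1)
    (hnm : n ≤ m) (h2n : m ≤ 2*n) :
    lg ((m:ℝ)+1) ^ a * llg ((m:ℝ)+1) ^ b ≤
      ((4:ℝ)^|a| * (4:ℝ)^|b|) * (lg ((n:ℝ)+1) ^ a * llg ((n:ℝ)+1) ^ b) := by
  obtain ⟨e1, e2, e3, e4, e5⟩ := exp_facts
  set M : ℝ := (m:ℝ)+1 with hM
  set Nr : ℝ := (n:ℝ)+1 with hNr
  obtain ⟨hlg, hL2, hllg, hLL2, hLM, hLLL⟩ := log_facts h1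
  set L : ℝ := Real.log M with hLdef
  set LL : ℝ := Real.log L with hLLdef
  have hMpos : (0:ℝ) < M := by linarith
  have hLpos : (0:ℝ) < L := by linarith
  have hLLpos : (0:ℝ) < LL := by linarith
  have hL4 : (4:ℝ) ≤ L := by linarith
  have h22 : rexp 2 = rexp 1 * rexp 1 := by rw [← Real.exp_add]; norm_num
  have hNM : Nr ≤ M := by
    rw [hNr, hM]; have : (n:ℝ) ≤ m := Nat.cast_le.2 hnm; linarith
  have hMN2 : M ≤ 2 * Nr := by
    rw [hNr, hM]; have : (m:ℝ) ≤ 2*n := by exact_mod_cast Nat.cast_le.2 h2n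
    push_cast at this ⊢; linarith
  have hNre : rexp 1 ≤ Nr := by linarith
  have hlgNr : lg Nr = Real.log Nr := lg_eq_log hNre
  have hNrpos : (0:ℝ) < Nr := by linarith
  have hlogNr_low : L/2 ≤ Real.log Nr := by
    have h := Real.log_le_log (by linarith : (0:ℝ) < M/2) (by linarith : M/2 ≤ Nr)
    have : Real.log (M/2) = L - Real.log 2 := by
      rw [Real.log_div (ne_of_gt hMpos) (by norm_num), hLdef]
    linarith
  have hlogNr_up : Real.log Nr ≤ L := by
    rw [hLdef]; exact Real.log_le_log hNrpos hNM
  have hlgNre : rexp 1 ≤ Real.log Nr := by nlinarith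
  have hllgNr : llg Nr = Real.log (Real.log Nr) := by
    rw [llg, hlgNr, lg_eq_log hlgNre]
  have hllgNr_low : LL/2 ≤ Real.log (Real.log Nr) := by
    have h := Real.log_le_log (by linarith : (0:ℝ) < L/2) hlogNr_low
    have : Real.log (L/2) = LL - Real.log 2 := by
      rw [Real.log_div (ne_of_gt hLpos) (by norm_num), hLLdef]
    linarith
  have hllgNr_up : Real.log (Real.log Nr) ≤ LL := by
    rw [hLLdef]; exact Real.log_le_log (by linarith) hlogNr_up
  have hrp1 : L ^ a ≤ 4^|a| * lg Nr ^ a := by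
    apply rpow_comp4 (lg_pos Nr) _ _ a
    · rw [hlgNr]; linarith
    · rw [hlgNr]; linarith
  have hrp2 : LL ^ b ≤ 4^|b| * llg Nr ^ b := by
    apply rpow_comp4 (llg_pos Nr) _ _ b
    · rw [hllgNr]; linarith
    · rw [hllgNr]; linarith
  calc lg M ^ a * llg M ^ b = L ^ a * LL ^ b := by rw [hlg, hllg]
  _ ≤ (4^|a| * lg Nr ^ a) * (4^|b| * llg Nr ^ b) := by
      apply mul_le_mul hrp1 hrp2 (Real.rpow_nonneg hLLpos.le _)
      exact mul_nonneg (Real.rpow_nonneg (by norm_num) _) (Real.rpow_nonneg (lg_pos Nr).le _)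
  _ = ((4:ℝ)^|a| * (4:ℝ)^|b|) * (lg Nr ^ a * llg Nr ^ b) := by ring

lemma init_est (a b : ℝ) {x R : ℝ} (hx0 : 0 ≤ x) (hxR : x ≤ R) :
    x^2 * lg x ^ a * llg x ^ (b-1) ≤ R^2 * lg R ^ |a| * llg R ^ |b-1| := by
  have h1 : x^2 ≤ R^2 := by nlinarith
  have h2 : lg x ^ a ≤ lg R ^ |a| := rpow_le_abs (one_le_lg x) (lg_mono hxR)
  have h3 : llg x ^ (b-1) ≤ llg R ^ |b-1| := rpow_le_abs (one_le_llg x) (llg_mono hxR)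
  have n1 : (0:ℝ) ≤ lg R ^ |a| := Real.rpow_nonneg (lg_pos R).le _
  apply mul_le_mul _ h3 (Real.rpow_nonneg (llg_pos x).le _)
    (mul_nonneg (by nlinarith) n1)
  exact mul_le_mul h1 h2 (Real.rpow_nonneg (lg_pos x).le _) (by nlinarith)

theorem moment_of_tail_series (a b ε σ : ℝ) (ha : a ≥ -1) (hb : b ≥ -1)
    (hε : 0 < ε) (hσ : 0 < σ)
    {Ω : Type*} [MeasurableSpace Ω] (μ : Measure Ω) [IsProbabilityMeasure μ]
    (X : Ω → ℝ) (hX : Measurable X)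
    (hsum : Summable fun n : ℕ =>
      (lg (n + 1 : ℕ)) ^ a * (llg (n + 1 : ℕ)) ^ b *
        (μ {ω | 3 * ε * σ * phi (n + 1) ≤ |X ω|}).toReal) :
    Integrable (fun ω => X ω ^ 2 * (lg |X ω|) ^ a * (llg |X ω|) ^ (b - 1)) μ := by
  simp only [Nat.cast_add, Nat.cast_one] at hsum
  set c : ℝ := 3 * ε * σ with hcdef
  have hc : 0 < c := by positivity
  -- basic objects
  set u : ℕ → ℝ := fun n => lg ((n:ℝ)+1) ^ a * llg ((n:ℝ)+1) ^ b with hu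
  have hu_nonneg : ∀ n, 0 ≤ u n := fun n =>
    mul_nonneg (Real.rpow_nonneg (lg_pos _).le _) (Real.rpow_nonneg (llg_pos _).le _)
  set U : ℕ → ℝ≥0∞ := fun n => ENNReal.ofReal (u n) with hU
  set S : ℕ → Set Ω := fun n => {ω | c * phi (n+1) ≤ |X ω|} with hSdef
  have hSmeas : ∀ n, MeasurableSet (S n) := fun n =>
    measurableSet_le measurable_const hX.abs
  set Layer : ℕ → Set Ω := fun m =>
    {ω | c * phi (m+1) ≤ |X ω|} ∩ {ω | |X ω| < c * phi (m+2)} with hLayer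
  have hLmeas : ∀ m, MeasurableSet (Layer m) := fun m =>
    (measurableSet_le measurable_const hX.abs).inter
      (measurableSet_lt hX.abs measurable_const)
  have hLsubS : ∀ {n m : ℕ}, n ≤ m → Layer m ⊆ S n := by
    intro n m hnm ω hω
    exact le_trans (mul_le_mul_of_nonneg_left (phi_mono (by omega)) hc.le) hω.1
  have hLdisj : Pairwise (Function.onFun Disjoint Layer) := by
    intro m m' hmm
    wlog h : m < m' generalizing m m'
    · exact (this hmm.symm (by omega)).symm
    rw [Function.onFun, Set.disjoint_left]
    rintro ω ⟨_, h2⟩ ⟨h3, _⟩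
    have : c * phi (m+2) ≤ c * phi (m'+1) :=
      mul_le_mul_of_nonneg_left (phi_mono (by omega)) hc.le
    simp only [mem_setOf_eq] at h2 h3
    linarith
  -- summability in ℝ≥0∞
  have hS : ∑' n, U n * μ (S n) ≠ ⊤ := by
    have heq : ∀ n, U n * μ (S n) = ENNReal.ofReal (u n * (μ (S n)).toReal) := by
      intro n
      rw [ENNReal.ofReal_mul (hu_nonneg n), ENNReal.ofReal_toReal (measure_ne_top μ _)]
    calc ∑' n, U n * μ (S n) = ∑' n, ENNReal.ofReal (u n * (μ (S n)).toReal) := by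
          exact tsum_congr heq
    _ = ENNReal.ofReal (∑' n, u n * (μ (S n)).toReal) :=
          (ENNReal.ofReal_tsum_of_nonneg
            (fun n => mul_nonneg (hu_nonneg n) ENNReal.toReal_nonneg) hsum).symm
    _ ≠ ⊤ := ENNReal.ofReal_ne_top
  -- choice of N
  have hMcast : Tendsto (fun m : ℕ => (m:ℝ)+1) atTop atTop :=
    tendsto_atTop_add_const_right _ 1 tendsto_natCast_atTop_atTop
  have hEv : ∀ᶠ m : ℕ in atTop,
      rexp (rexp 2) ≤ (m:ℝ)+1 ∧ 1 ≤ 2*c^2* llg ((m:ℝ)+1) ∧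
        rexp (rexp 1)^2 ≤ (m:ℝ)+1 ∧ 8*c^2 ≤ ((m:ℝ)+1)^2 := by
    have h1 := hMcast.eventually_ge_atTop (rexp (rexp 2))
    have h2 : ∀ᶠ m : ℕ in atTop, 1/(2*c^2) ≤ llg ((m:ℝ)+1) :=
      (llg_tendsto.comp hMcast).eventually_ge_atTop _
    have h3 := hMcast.eventually_ge_atTop (rexp (rexp 1)^2)
    have h4 := hMcast.eventually_ge_atTop (8*c^2 + 1)
    filter_upwards [h1, h2, h3, h4] with m g1 g2 g3 g4
    refine ⟨g1, ?_, g3, ?_⟩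
    · have := mul_le_mul_of_nonneg_left g2 (by positivity : (0:ℝ) ≤ 2*c^2)
      have he : 2*c^2 * (1/(2*c^2)) = 1 := by field_simp
      linarith
    · nlinarith [sq_nonneg c]
  obtain ⟨N, hN⟩ := eventually_atTop.mp hEv
  -- the integrand and its measurability
  set f : Ω → ℝ := fun ω => X ω ^ 2 * lg |X ω| ^ a * llg |X ω| ^ (b-1) with hf
  have hlgm : Measurable lg := Real.measurable_log.comp (measurable_id.max measurable_const)
  have hllgm : Measurable llg := hlgm.comp hlgm
  have hfm : Measurable f := by
    apply Measurable.mul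
    apply Measurable.mul
    · exact hX.pow_const 2
    · exact ((hlgm.comp hX.abs).pow measurable_const)
    · exact ((hllgm.comp hX.abs).pow measurable_const)
  have hf_nonneg : ∀ ω, 0 ≤ f ω := by
    intro ω
    apply mul_nonneg (mul_nonneg (by positivity) _) (Real.rpow_nonneg (llg_pos _).le _)
    exact Real.rpow_nonneg (lg_pos _).le _
  -- covering
  set R : ℝ := c * phi (N+1) with hR
  set A : Set Ω := {ω | |X ω| < R} with hA
  have hAmeas : MeasurableSet A := measurableSet_lt hX.abs measurable_const
  have hcov : ∀ ω : Ω, ω ∈ A ∪ ⋃ j : ℕ, Layer (N+j) := by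
    intro ω
    by_cases hωA : |X ω| < R
    · exact Or.inl hωA
    push_neg at hωA
    right
    have htend : Tendsto (fun k : ℕ => c * phi (k+1)) atTop atTop :=
      (phi_tendsto.comp (tendsto_add_atTop_nat 1)).const_mul_atTop hc
    obtain ⟨K, hK⟩ := eventually_atTop.mp (htend.eventually_gt_atTop (|X ω|))
    set T : Set ℕ := {k | c * phi (k+1) ≤ |X ω|} with hT
    have hTN : N ∈ T := hωA
    have hTbdd : BddAbove T := by
      refine ⟨K, fun k hk => ?_⟩
      by_contra hkK
      push_neg at hkK
      exact absurd hk (not_le.2 (hK k (by omega)))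
    have hmem := Nat.sSup_mem ⟨N, hTN⟩ hTbdd
    set m := sSup T with hm
    have hNm : N ≤ m := le_csSup hTbdd hTN
    have hm1 : m + 1 ∉ T := fun h => by
      have := le_csSup hTbdd h; omega
    refine mem_iUnion.2 ⟨m - N, ?_⟩
    have hmN : N + (m - N) = m := by omega
    rw [hmN]
    refine ⟨hmem, ?_⟩
    simp only [mem_setOf_eq]
    by_contra hcon
    push_neg at hcon
    exact hm1 hcon
  -- pointwise bound on A
  set M₀ : ℝ := R^2 * lg R ^ |a| * llg R ^ |b-1| with hM₀
  have hfA : ∀ ω ∈ A, ENNReal.ofReal (f ω) ≤ ENNReal.ofReal M₀ := by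
    intro ω hω
    apply ENNReal.ofReal_le_ofReal
    have h1 : f ω = |X ω|^2 * lg |X ω| ^ a * llg |X ω| ^ (b-1) := by
      rw [hf]; rw [sq_abs]
    rw [h1, hM₀]
    exact init_est a b (abs_nonneg _) (le_of_lt hω)
  -- pointwise bound on layers
  set D : ℝ := 8*c^2*(4:ℝ)^|a| * (4:ℝ)^|b-1| with hD
  have hD_nonneg : 0 ≤ D := by positivity
  have hfL : ∀ m, N ≤ m → ∀ ω ∈ Layer m,
      ENNReal.ofReal (f ω) ≤ ENNReal.ofReal D * (ENNReal.ofReal ((m:ℝ)+1) * U m) := by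
    intro m hm ω hω
    obtain ⟨g1, g2, g3, g4⟩ := hN m hm
    have hb1 : f ω = |X ω|^2 * lg |X ω| ^ a * llg |X ω| ^ (b-1) := by
      rw [hf]; rw [sq_abs]
    have hle := layer_est a b c hc m g1 g2 g3 g4 (abs_nonneg (X ω)) hω.1 (le_of_lt hω.2)
    rw [← ENNReal.ofReal_mul (by positivity), ← ENNReal.ofReal_mul hD_nonneg]
    apply ENNReal.ofReal_le_ofReal
    rw [hb1]
    calc |X ω|^2 * lg |X ω| ^ a * llg |X ω| ^ (b-1) ≤
        D * (((m:ℝ)+1) * (lg ((m:ℝ)+1) ^ a * llg ((m:ℝ)+1) ^ b)) := hle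
    _ = D * (((m:ℝ)+1) * u m) := by rw [hu]
  -- the comparison sum machinery
  set E : ℝ := (4:ℝ)^|a| * (4:ℝ)^|b| with hE
  have hE_nonneg : 0 ≤ E := by positivity
  have hUcomp : ∀ m, N ≤ m → ∀ n ∈ Finset.Icc ((m+1)/2) m, U m ≤ ENNReal.ofReal E * U n := by
    intro m hm n hn
    obtain ⟨g1, _, _, _⟩ := hN m hm
    rw [Finset.mem_Icc] at hn
    have hcomp := comp_est a b g1 hn.2 (by omega)
    rw [hU, ← ENNReal.ofReal_mul hE_nonneg]
    exact ENNReal.ofReal_le_ofReal hcomp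
  have hkey : ∀ m, N ≤ m → ENNReal.ofReal ((m:ℝ)+1) * U m ≤
      2 * ENNReal.ofReal E * ∑ n ∈ Finset.Icc ((m+1)/2) m, U n := by
    intro m hm
    have hcard : (Finset.Icc ((m+1)/2) m).card = m + 1 - (m+1)/2 := Nat.card_Icc _ _
    have hcard2 : m + 1 ≤ 2 * (Finset.Icc ((m+1)/2) m).card := by
      rw [hcard]; omega
    have h1 : ENNReal.ofReal ((m:ℝ)+1) = ((m+1 : ℕ) : ℝ≥0∞) := by
      rw [← ENNReal.ofReal_natCast (m+1)]
      push_cast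
      try ring_nf
    calc ENNReal.ofReal ((m:ℝ)+1) * U m = ((m+1:ℕ) : ℝ≥0∞) * U m := by rw [h1]
    _ ≤ ((2 * (Finset.Icc ((m+1)/2) m).card : ℕ) : ℝ≥0∞) * U m := by
        refine mul_le_mul_left ?_ _
        exact_mod_cast hcard2
    _ = 2 * ((Finset.Icc ((m+1)/2) m).card * U m) := by push_cast; ring
    _ = 2 * ∑ n ∈ Finset.Icc ((m+1)/2) m, U m := by
        rw [Finset.sum_const, nsmul_eq_mul]
    _ ≤ 2 * ∑ n ∈ Finset.Icc ((m+1)/2) m, ENNReal.ofReal E * U n := by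
        gcongr 2 * ?_
        exact Finset.sum_le_sum (hUcomp m hm)
    _ = 2 * ENNReal.ofReal E * ∑ n ∈ Finset.Icc ((m+1)/2) m, U n := by
        rw [← Finset.mul_sum]; ring
  -- double sum bound
  set w : ℕ → ℕ → ℝ≥0∞ := fun m n =>
    if n ∈ Finset.Icc ((m+1)/2) m then U n * μ (Layer m) else 0 with hw
  have hwsum : ∀ m, ∑' n, w m n = ∑ n ∈ Finset.Icc ((m+1)/2) m, U n * μ (Layer m) := by
    intro m
    rw [tsum_eq_sum (s := Finset.Icc ((m+1)/2) m)
      (fun n hn => by simp only [hw]; simp [hn])]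
    exact Finset.sum_congr rfl (fun n hn => by simp only [hw]; simp [hn])
  have hlayersum : ∀ n, (∑' m, if n ≤ m then μ (Layer m) else 0) ≤ μ (S n) := by
    intro n
    rw [ENNReal.tsum_eq_iSup_sum]
    apply iSup_le
    intro s
    classical
    calc ∑ m ∈ s, (if n ≤ m then μ (Layer m) else 0)
        = ∑ m ∈ s.filter (fun m => n ≤ m), μ (Layer m) := by
          rw [Finset.sum_filter]
    _ = μ (⋃ m ∈ s.filter (fun m => n ≤ m), Layer m) := by
          refine (measure_biUnion_finset ?_ (fun m _ => hLmeas m)).symm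
          intro x hx y hy hxy
          exact hLdisj hxy
    _ ≤ μ (S n) := by
          apply measure_mono
          refine iUnion₂_subset fun m hm => ?_
          rw [Finset.mem_filter] at hm
          exact hLsubS hm.2
  have hwcol : ∀ n, ∑' m, w m n ≤ U n * μ (S n) := by
    intro n
    calc ∑' m, w m n ≤ ∑' m, U n * (if n ≤ m then μ (Layer m) else 0) := by
          apply ENNReal.tsum_le_tsum
          intro m
          simp only [hw]
          by_cases hmem : n ∈ Finset.Icc ((m+1)/2) m
          · rw [if_pos hmem, if_pos (Finset.mem_Icc.1 hmem).2]
          · rw [if_neg hmem]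
            exact zero_le
    _ = U n * ∑' m, (if n ≤ m then μ (Layer m) else 0) := ENNReal.tsum_mul_left
    _ ≤ U n * μ (S n) := by
          gcongr
          exact hlayersum n
  have hdouble : ∑' (m : ℕ), ∑' (n : ℕ), w m n ≤ ∑' n, U n * μ (S n) := by
    rw [ENNReal.tsum_comm]
    exact ENNReal.tsum_le_tsum hwcol
  -- per-layer integral bound and total
  have hlayint : ∀ m, N ≤ m → ∫⁻ ω in Layer m, ENNReal.ofReal (f ω) ∂μ ≤
      (2 * ENNReal.ofReal D * ENNReal.ofReal E) * ∑' n, w m n := by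
    intro m hm
    calc ∫⁻ ω in Layer m, ENNReal.ofReal (f ω) ∂μ
        ≤ ∫⁻ _ in Layer m, (ENNReal.ofReal D * (ENNReal.ofReal ((m:ℝ)+1) * U m)) ∂μ := by
          apply setLIntegral_mono measurable_const
          exact hfL m hm
    _ = ENNReal.ofReal D * (ENNReal.ofReal ((m:ℝ)+1) * U m) * μ (Layer m) :=
          setLIntegral_const _ _
    _ ≤ ENNReal.ofReal D * (2 * ENNReal.ofReal E * ∑ n ∈ Finset.Icc ((m+1)/2) m, U n)
          * μ (Layer m) :=
          mul_le_mul_left (mul_le_mul_right (hkey m hm) _) _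
    _ = (2 * ENNReal.ofReal D * ENNReal.ofReal E) *
          (∑ n ∈ Finset.Icc ((m+1)/2) m, U n * μ (Layer m)) := by
          rw [← Finset.sum_mul]
          ring
    _ = (2 * ENNReal.ofReal D * ENNReal.ofReal E) * ∑' n, w m n := by rw [hwsum m]
  -- main estimate
  have hmain : ∫⁻ ω, ENNReal.ofReal (f ω) ∂μ < ⊤ := by
    have hsub : (univ : Set Ω) ⊆ A ∪ ⋃ j : ℕ, Layer (N+j) := fun ω _ => hcov ω
    calc ∫⁻ ω, ENNReal.ofReal (f ω) ∂μ
        = ∫⁻ ω in univ, ENNReal.ofReal (f ω) ∂μ := by rw [Measure.restrict_univ]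
    _ ≤ ∫⁻ ω in A ∪ ⋃ j : ℕ, Layer (N+j), ENNReal.ofReal (f ω) ∂μ :=
          lintegral_mono_set hsub
    _ ≤ (∫⁻ ω in A, ENNReal.ofReal (f ω) ∂μ) +
          ∫⁻ ω in ⋃ j : ℕ, Layer (N+j), ENNReal.ofReal (f ω) ∂μ :=
          lintegral_union_le _ _ _
    _ ≤ ENNReal.ofReal M₀ + ∑' j : ℕ, ∫⁻ ω in Layer (N+j), ENNReal.ofReal (f ω) ∂μ := by
          gcongr
          · calc ∫⁻ ω in A, ENNReal.ofReal (f ω) ∂μ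
                ≤ ∫⁻ _ in A, ENNReal.ofReal M₀ ∂μ := setLIntegral_mono measurable_const hfA
            _ = ENNReal.ofReal M₀ * μ A := setLIntegral_const _ _
            _ ≤ ENNReal.ofReal M₀ * 1 := by gcongr; exact prob_le_one
            _ = ENNReal.ofReal M₀ := mul_one _
          · exact lintegral_iUnion_le _ _
    _ ≤ ENNReal.ofReal M₀ + ∑' j : ℕ,
          (2 * ENNReal.ofReal D * ENNReal.ofReal E) * ∑' n, w (N+j) n := by
          gcongr with j
          exact hlayint (N+j) (by omega)
    _ = ENNReal.ofReal M₀ + (2 * ENNReal.ofReal D * ENNReal.ofReal E) *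
          ∑' j : ℕ, ∑' n, w (N+j) n := by rw [ENNReal.tsum_mul_left]
    _ ≤ ENNReal.ofReal M₀ + (2 * ENNReal.ofReal D * ENNReal.ofReal E) *
          ∑' m : ℕ, ∑' n, w m n :=
          add_le_add_right (mul_le_mul_right
            (ENNReal.tsum_comp_le_tsum_of_injective (add_right_injective N)
              (fun m => ∑' n, w m n)) _) _
    _ ≤ ENNReal.ofReal M₀ + (2 * ENNReal.ofReal D * ENNReal.ofReal E) *
          ∑' n, U n * μ (S n) :=
          add_le_add_right (mul_le_mul_right hdouble _) _
    _ < ⊤ := by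
          apply ENNReal.add_lt_top.2
          constructor
          · exact ENNReal.ofReal_lt_top
          · apply ENNReal.mul_lt_top
            · exact (ENNReal.mul_lt_top (ENNReal.mul_lt_top (by norm_num : (2:ℝ≥0∞) < ⊤) ENNReal.ofReal_lt_top) ENNReal.ofReal_lt_top)
            · exact lt_top_iff_ne_top.2 hS
  -- conclude
  refine ⟨hfm.aestronglyMeasurable, ?_⟩
  rw [hasFiniteIntegral_iff_ofReal (ae_of_all μ hf_nonneg)]
  exact hmain
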